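/- arXiv:2111.05626 — 8 statements merged into one kernel-verified Lean document; each statement's English description precedes it below -/
import Mathlib

section
/- Let k be a positive integer such that 2k-1 is an odd prime power. If (x, y, z) are positive integers with x^2 + (2k-1)^y = k^z, then z > y and z is odd, unless (x,y,z) = (k-1, 1, 2). -/
/-!
Write q = 2k - 1 = p^m, so q ≡ -1 (mod 2k) and p ∤ 2k. Since k ≤ q, k^y ≤ q^y < k^z.
If z = 2w, then (k^w - x)(k^w + x) = p^(my), and as p does not divide the sum 2k^w of the
factors, k^w - x = 1, i.e. 2k^w = q^y + 1. For even y this is impossible modulo k and then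
modulo 4. For odd y ≥ 3, the expansion q^y + 1 ≡ 2ky (mod 4k²) forces k to be odd, and lifting
the exponent at each prime of k gives k^(w-1) ∣ y; but then q^y + 1 = 2k·k^(w-1) ≤ (q + 1)y,
which is too small. So y = 1, w = 1 and x = k - 1.
-/

lemma Nat.Prime.not_dvd_two_mul_pow {r q k : ℕ} (hr : r.Prime) (hqk : q + 1 = 2 * k)
    (hrq : r ∣ q) (w : ℕ) : ¬ r ∣ 2 * k ^ w := by
  intro h
  have h2k : r ∣ q + 1 := hqk ▸ (hr.dvd_mul.1 h).elim (dvd_mul_of_dvd_left · k)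
    (fun hkw => dvd_mul_of_dvd_right (hr.dvd_of_dvd_pow hkw) 2)
  exact hr.one_lt.ne' (Nat.dvd_one.1 ((Nat.dvd_add_right hrq).1 h2k))

lemma eq_one_or_eq_one_of_mul_eq_prime_pow {p a b n : ℕ} (hp : p.Prime) (h : a * b = p ^ n)
    (hab : ¬ p ∣ a + b) : a = 1 ∨ b = 1 := by
  obtain ⟨i, -, rfl⟩ := (Nat.dvd_prime_pow hp).1 (Dvd.intro _ h)
  obtain ⟨j, -, rfl⟩ := (Nat.dvd_prime_pow hp).1 (Dvd.intro_left _ h)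
  rcases Nat.eq_zero_or_pos i with rfl | hi
  · exact Or.inl (pow_zero p)
  rcases Nat.eq_zero_or_pos j with rfl | hj
  · exact Or.inr (pow_zero p)
  exact absurd (dvd_add (dvd_pow_self p hi.ne') (dvd_pow_self p hj.ne')) hab

lemma two_mul_eq_prime_pow_add_one {p n x N : ℕ} (hp : p.Prime) (hN : ¬ p ∣ 2 * N) (hx : 0 < x)
    (h : x ^ 2 + p ^ n = N ^ 2) : 2 * N = p ^ n + 1 := by
  have hxN : x < N :=
    lt_of_pow_lt_pow_left₀ 2 (Nat.zero_le N) (by have := pow_pos hp.pos n; omega)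
  have hfac : (N - x) * (N + x) = p ^ n := by
    rw [mul_comm, ← Nat.sq_sub_sq]
    omega
  have hsum : N - x + (N + x) = 2 * N := by omega
  rcases eq_one_or_eq_one_of_mul_eq_prime_pow hp hfac (hsum ▸ hN) with h1 | h1
  · rw [h1, one_mul] at hfac
    omega
  · omega

lemma lt_of_sq_add_pow_eq_pow {q k x y z : ℕ} (hk : 1 < k) (hkq : k ≤ q) (hx : 0 < x)
    (h : x ^ 2 + q ^ y = k ^ z) : y < z := by
  refine (Nat.pow_lt_pow_iff_right hk).1 ?_
  calc k ^ y ≤ q ^ y := Nat.pow_le_pow_left hkq y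
    _ < k ^ z := by have := pow_pos hx 2; omega

lemma add_one_mul_lt_pow_add_one {q : ℕ} (hq : 3 ≤ q) {y : ℕ} (hy : 2 ≤ y) :
    (q + 1) * y < q ^ y + 1 := by
  induction y, hy using Nat.le_induction with
  | base => nlinarith
  | succ y hy ih =>
    have : q ≤ q ^ y := Nat.le_self_pow (by omega) q
    rw [pow_succ]
    nlinarith

lemma sq_dvd_pow_add_one_sub (q : ℤ) {y : ℕ} (hy : Odd y) :
    (q + 1) ^ 2 ∣ q ^ y + 1 - (q + 1) * y := by
  have h := sq_dvd_add_pow_sub_sub (q + 1) (-1) y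
  rw [(Nat.Odd.sub_odd hy odd_one).neg_one_pow, hy.neg_one_pow] at h
  rwa [show (-1 + (q + 1)) ^ y - 1 * (q + 1) * (y : ℤ) - -1 = q ^ y + 1 - (q + 1) * y by ring]
    at h

section

variable {q k w y : ℕ}

lemma not_even_of_two_mul_pow_eq (hqk : q + 1 = 2 * k) (hk : 2 ≤ k) (hw : w ≠ 0)
    (h : 2 * k ^ w = q ^ y + 1) : ¬ Even y := by
  rintro ⟨t, rfl⟩
  have hq : (q : ZMod k) = -1 := by
    have := congrArg (Nat.cast : ℕ → ZMod k) hqk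
    push_cast [ZMod.natCast_self] at this
    linear_combination this
  have hk2 : k ∣ 2 := by
    have := congrArg (Nat.cast : ℕ → ZMod k) h
    push_cast [ZMod.natCast_self, zero_pow hw, hq, Even.neg_one_pow ⟨t, rfl⟩] at this
    exact (ZMod.natCast_eq_zero_iff 2 k).1 (by push_cast; linear_combination -this)
  obtain rfl : k = 2 := le_antisymm (Nat.le_of_dvd two_pos hk2) hk
  obtain rfl : q = 3 := by omega
  obtain ⟨v, rfl⟩ : ∃ v, w = v + 1 := ⟨w - 1, by omega⟩
  have hrhs : (3 ^ (t + t) + 1) % 4 = 2 := by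
    rw [← two_mul, pow_mul, Nat.add_mod, Nat.pow_mod]
    norm_num
  rw [← h, pow_succ] at hrhs
  omega

lemma odd_of_two_mul_pow_succ_eq (hqk : q + 1 = 2 * k) (hw : w ≠ 0) (hy : Odd y)
    (h : 2 * k ^ (w + 1) = q ^ y + 1) : Odd k := by
  have hdvd := sq_dvd_pow_add_one_sub (q : ℤ) hy
  have hk0 : (2 * k : ℤ) ≠ 0 := by omega
  have h' : (q : ℤ) ^ y + 1 = 2 * k ^ (w + 1) := by exact_mod_cast h.symm
  have hqk' : (q : ℤ) + 1 = 2 * k := by exact_mod_cast hqk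
  rw [h', hqk', show 2 * (k : ℤ) ^ (w + 1) - 2 * k * y = (2 * k) * (k ^ w - y) by ring, sq]
    at hdvd
  have h2 : (2 : ℤ) ∣ k ^ w - y :=
    (dvd_mul_right 2 (k : ℤ)).trans ((mul_dvd_mul_iff_left hk0).1 hdvd)
  by_contra hk
  have := Int.even_sub.1 (even_iff_two_dvd.2 h2)
  exact Nat.not_even_iff_odd.2 hy ((Int.even_coe_nat y).1
    (this.1 (((Int.even_coe_nat k).2 (Nat.not_odd_iff_even.1 hk)).pow_of_ne_zero hw)))

lemma pow_dvd_of_two_mul_pow_succ_eq (hqk : q + 1 = 2 * k) (hk : Odd k) (hy : Odd y)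
    (h : 2 * k ^ (w + 1) = q ^ y + 1) : k ^ w ∣ y := by
  have hk0 : k ≠ 0 := hk.pos.ne'
  refine (Nat.factorization_prime_le_iff_dvd (pow_ne_zero w hk0) hy.pos.ne').1 fun r hr => ?_
  by_cases hrk : r ∣ k
  swap
  · simp [Nat.factorization_eq_zero_of_not_dvd hrk]
  have := Fact.mk hr
  have hr2 : ¬ r ∣ 2 := fun hr2 => Nat.not_even_iff_odd.2 hk
    (even_iff_two_dvd.2 ((Nat.prime_dvd_prime_iff_eq hr Nat.prime_two).1 hr2 ▸ hrk))
  have hrq1 : r ∣ q + 1 := hqk ▸ dvd_mul_of_dvd_right hrk 2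
  have hrq : ¬ r ∣ q := fun hrq => hr.one_lt.ne' (Nat.dvd_one.1 ((Nat.dvd_add_right hrq).1 hrq1))
  have hr_odd : Odd r := hr.eq_two_or_odd'.resolve_left fun h2 => hr2 (h2 ▸ dvd_rfl)
  have hlte := padicValNat.pow_add_pow hr_odd (x := q) (y := 1) hrq1 hrq hy
  rw [one_pow, ← h, hqk, padicValNat.mul two_ne_zero (pow_ne_zero _ hk0), padicValNat.pow,
    padicValNat.mul two_ne_zero hk0, padicValNat.eq_zero_of_not_dvd hr2] at hlte
  rw [Nat.factorization_def _ hr, Nat.factorization_def _ hr, padicValNat.pow]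
  linarith

lemma eq_one_of_two_mul_pow_eq (hqk : q + 1 = 2 * k) (hk : 2 ≤ k) (hw : w ≠ 0)
    (h : 2 * k ^ w = q ^ y + 1) : y = 1 := by
  have hy : Odd y := Nat.not_even_iff_odd.1 (not_even_of_two_mul_pow_eq hqk hk hw h)
  by_contra hy1
  obtain ⟨v, rfl⟩ : ∃ v, w = v + 1 := ⟨w - 1, by omega⟩
  have hv : v ≠ 0 := by
    rintro rfl
    rw [zero_add, pow_one] at h
    exact hy1 ((Nat.pow_eq_self_iff (a := q) (by omega)).1 (by omega))
  have hky : k ^ v ≤ y := Nat.le_of_dvd hy.pos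
    (pow_dvd_of_two_mul_pow_succ_eq hqk (odd_of_two_mul_pow_succ_eq hqk hv hy h) hy h)
  have hlt := add_one_mul_lt_pow_add_one (q := q) (by omega) (y := y) (by have := hy.pos; omega)
  have : q ^ y + 1 = (q + 1) * k ^ v := by rw [← h, hqk]; ring
  nlinarith

end

theorem stmt_1_general (k x y z : ℕ)
    (hpp : ∃ p m : ℕ, p.Prime ∧ Odd p ∧ 0 < m ∧ 2 * k - 1 = p ^ m)
    (hx : 0 < x)
    (heq : x ^ 2 + (2 * k - 1) ^ y = k ^ z) :
    (x = k - 1 ∧ y = 1 ∧ z = 2) ∨ (z > y ∧ Odd z) := by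
  obtain ⟨p, m, hp, -, hm, hq⟩ := hpp
  have hk : 2 ≤ k := by have := Nat.one_lt_pow hm.ne' hp.one_lt; omega
  set q := 2 * k - 1
  have hqk : q + 1 = 2 * k := by omega
  have hyz : y < z := lt_of_sq_add_pow_eq_pow (by omega) (by omega) hx heq
  rcases Nat.even_or_odd z with ⟨w, rfl⟩ | hz
  swap
  · exact Or.inr ⟨hyz, hz⟩
  have hE : 2 * k ^ w = q ^ y + 1 := by
    rw [hq, ← pow_mul] at heq ⊢
    have hpq : p ∣ q := hq ▸ dvd_pow_self p hm.ne'
    refine two_mul_eq_prime_pow_add_one hp (hp.not_dvd_two_mul_pow hqk hpq w) hx ?_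
    rw [heq]; ring
  obtain rfl : y = 1 := eq_one_of_two_mul_pow_eq hqk hk (by omega) hE
  obtain rfl : w = 1 := Nat.pow_right_injective hk (by simpa [hqk] using hE)
  refine Or.inl ⟨Nat.pow_left_injective two_ne_zero ?_, rfl, rfl⟩
  zify [hk.trans' one_le_two] at heq hqk ⊢
  linear_combination heq - hqk

theorem stmt_1 (k x y z : ℕ) (hk : 0 < k)
    (hpp : ∃ p m : ℕ, p.Prime ∧ Odd p ∧ 0 < m ∧ 2 * k - 1 = p ^ m)
    (hx : 0 < x) (hy : 0 < y) (hz : 0 < z)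
    (heq : x ^ 2 + (2 * k - 1) ^ y = k ^ z) :
    (x = k - 1 ∧ y = 1 ∧ z = 2) ∨ (z > y ∧ Odd z) :=
  stmt_1_general k x y z hpp hx heq
end

section
/- If k = 2^r for some positive integer r with k > 1, then the only solution in positive integers of x^2 + (2k-1)^y = k^z is (x, y, z) = (k-1, 1, 2). -/
private lemma binom_aux (X Y : ℤ) : ∀ n : ℕ,
    Y ^ 2 ∣ (X + Y) ^ (n + 1) - X ^ (n + 1) - ((n : ℤ) + 1) * X ^ n * Y := by
  intro n
  induction n with
  | zero => exact ⟨0, by push_cast; ring⟩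
  | succ n ih =>
    obtain ⟨c, hc⟩ := ih
    refine ⟨((n : ℤ) + 1) * X ^ n + (X + Y) * c, ?_⟩
    push_cast
    linear_combination (X + Y) * hc

theorem stmt_2 (k r : ℕ) (hr : 0 < r) (hk2 : k = 2 ^ r) (hk1 : 1 < k)
    (x y z : ℕ) (hx : 0 < x) (hy : 0 < y) (hz : 0 < z)
    (heq : x ^ 2 + (2 * k - 1) ^ y = k ^ z) :
    x = k - 1 ∧ y = 1 ∧ z = 2 := by
  subst hk2
  set N := 2 * 2 ^ r - 1 with hNdef
  have h2r : 2 ≤ 2 ^ r := hk1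
  have hN1 : N + 1 = 2 ^ (r + 1) := by
    have h : 2 ^ (r + 1) = 2 * 2 ^ r := by rw [pow_succ]; ring
    omega
  have hNodd : Odd N := ⟨2 ^ r - 1, by omega⟩
  -- z ≥ 2
  have hz2 : 2 ≤ z := by
    by_contra h
    have hz1 : z = 1 := by omega
    subst hz1
    rw [pow_one] at heq
    have h1 : N ≤ N ^ y := Nat.le_self_pow hy.ne' N
    have h2 : 1 ≤ x ^ 2 := Nat.one_le_iff_ne_zero.mpr (pow_ne_zero 2 hx.ne')
    omega
  rw [← pow_mul] at heq
  have hrz2 : 2 ≤ r * z := le_trans (by omega) (Nat.mul_le_mul hr hz2)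
  -- x odd
  have hxo : Odd x := by
    rcases Nat.even_or_odd x with hxe | hxo
    · exfalso
      have h1 : Even (x ^ 2) := (Nat.even_pow).mpr ⟨hxe, by omega⟩
      have h2 : Odd (N ^ y) := hNodd.pow
      have h3 : (2 : ℕ) ∣ 2 ^ (r * z) := dvd_pow_self 2 (by omega)
      rw [Nat.even_iff] at h1
      rw [Nat.odd_iff] at h2
      omega
    · exact hxo
  -- y odd
  have hyo : Odd y := by
    rcases Nat.even_or_odd y with hye | hyo
    · exfalso
      have hc := congrArg (Nat.cast : ℕ → ZMod 4) heq
      push_cast at hc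
      have hpow0 : ∀ m : ℕ, 2 ≤ m → (2 : ZMod 4) ^ m = 0 := by
        intro m hm
        have h : (2 : ZMod 4) ^ m = (2 : ZMod 4) ^ 2 * 2 ^ (m - 2) := by
          rw [← pow_add]; congr 1; omega
        rw [h, show (2 : ZMod 4) ^ 2 = 0 from by decide, zero_mul]
      have hN4 : (N : ZMod 4) = 3 := by
        have h1 := congrArg (Nat.cast : ℕ → ZMod 4) hN1
        push_cast at h1
        have h2 : (2 : ZMod 4) ^ (r + 1) = 0 := hpow0 _ (by omega)
        rw [h2] at h1
        have h0 : (4 : ZMod 4) = 0 := by decide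
        linear_combination h1 - h0
      have hx4 : ((x : ZMod 4)) ^ 2 = 1 := by
        obtain ⟨t, ht⟩ := hxo
        subst ht
        push_cast
        have h4 : (4 : ZMod 4) = 0 := by decide
        linear_combination ((t : ZMod 4) ^ 2 + t) * h4
      have hNy : ((N : ZMod 4)) ^ y = 1 := by
        obtain ⟨m, hm⟩ := hye
        rw [hN4, hm, ← two_mul, pow_mul,
          show (3 : ZMod 4) ^ 2 = 1 from by decide, one_pow]
      rw [hx4, hNy, hpow0 _ hrz2] at hc
      exact absurd hc (by decide)
    · exact hyo
  rcases Nat.even_or_odd (r * z) with hrze | hrzo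
  swap
  · -- r*z odd : contradiction mod 3
    exfalso
    have hro : Odd r := (Nat.odd_mul.mp hrzo).1
    have hc := congrArg (Nat.cast : ℕ → ZMod 3) heq
    push_cast at hc
    have hN3 : (N : ZMod 3) = 0 := by
      obtain ⟨m, hm⟩ := hro
      have h1 := congrArg (Nat.cast : ℕ → ZMod 3) hN1
      push_cast at h1
      have h2 : (2 : ZMod 3) ^ (r + 1) = 1 := by
        rw [hm, show 2 * m + 1 + 1 = 2 * (m + 1) by ring, pow_mul,
          show (2 : ZMod 3) ^ 2 = 1 from by decide, one_pow]
      rw [h2] at h1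
      linear_combination h1
    have hp3 : (2 : ZMod 3) ^ (r * z) = 2 := by
      obtain ⟨w, hw⟩ := hrzo
      rw [hw, pow_succ, pow_mul,
        show (2 : ZMod 3) ^ 2 = 1 from by decide, one_pow, one_mul]
    rw [hN3, hp3, zero_pow hy.ne'] at hc
    have hsq : ∀ a : ZMod 3, a ^ 2 + 0 ≠ 2 := by decide
    exact hsq _ hc
  -- main case : r*z = 2*M
  obtain ⟨M, hM'⟩ := hrze
  have hM : r * z = 2 * M := by omega
  rw [hM] at heq
  have hNypos : 1 ≤ N ^ y := Nat.one_le_pow _ _ (by omega)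
  have hpow2M : (2 : ℕ) ^ (2 * M) = (2 ^ M) ^ 2 := by rw [← pow_mul]; ring_nf
  have hxlt : x < 2 ^ M := by
    by_contra h
    have h1 : (2 ^ M) ^ 2 ≤ x ^ 2 := Nat.pow_le_pow_left (by omega) 2
    omega
  obtain ⟨a, ha⟩ : ∃ a, a + x = 2 ^ M := ⟨2 ^ M - x, by omega⟩
  have hkey : a * (a + 2 * x) = N ^ y := by
    have h1 : ((a : ℤ) + x) ^ 2 = (x : ℤ) ^ 2 + (N : ℤ) ^ y := by
      have : ((a + x) ^ 2 : ℕ) = x ^ 2 + N ^ y := by rw [ha, ← hpow2M]; omega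
      exact_mod_cast this
    have h2 : ((a : ℤ)) * (a + 2 * x) = (N : ℤ) ^ y := by linear_combination h1
    exact_mod_cast h2
  have hapos : 0 < a := by
    rcases Nat.eq_zero_or_pos a with h | h
    · subst h; simp at hkey; omega
    · exact h
  set b := a + 2 * x with hbdef
  have haodd : Odd a := by
    rcases Nat.even_or_odd a with h | h
    · exfalso
      have := (h.mul_right b)
      rw [hkey] at this
      exact (Nat.not_even_iff_odd.mpr hNodd.pow) this
    · exact h
  have hbodd : Odd b := by
    rcases Nat.even_or_odd b with h | h
    · exfalso
      have := (h.mul_left a)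
      rw [hkey] at this
      exact (Nat.not_even_iff_odd.mpr hNodd.pow) this
    · exact h
  have habsum : a + b = 2 ^ (M + 1) := by
    have : 2 ^ (M + 1) = 2 * 2 ^ M := by rw [pow_succ]; ring
    omega
  have hcop : Nat.Coprime a b := by
    have hg1 : Nat.gcd a b ∣ 2 ^ (M + 1) := by
      rw [← habsum]
      exact Nat.dvd_add (Nat.gcd_dvd_left a b) (Nat.gcd_dvd_right a b)
    have hgodd : Odd (Nat.gcd a b) := by
      rcases Nat.even_or_odd (Nat.gcd a b) with h | h
      · exfalso
        have h2 : 2 ∣ a := dvd_trans h.two_dvd (Nat.gcd_dvd_left a b)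
        rw [Nat.odd_iff] at haodd
        omega
      · exact h
    have : Nat.Coprime (Nat.gcd a b) (2 ^ (M + 1)) :=
      Nat.Coprime.pow_right _ (Nat.coprime_two_right.mpr hgodd)
    exact this.eq_one_of_dvd hg1
  have hunit : IsUnit (gcd a b) := Nat.isUnit_iff.mpr hcop
  obtain ⟨u, hua⟩ : ∃ u, a = u ^ y := exists_eq_pow_of_mul_eq_pow hunit hkey
  obtain ⟨v, hvb⟩ : ∃ v, b = v ^ y := by
    have hkey' : b * a = N ^ y := by rw [mul_comm]; exact hkey
    have hunit' : IsUnit (gcd b a) := Nat.isUnit_iff.mpr hcop.symm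
    exact exists_eq_pow_of_mul_eq_pow hunit' hkey'
  have huv : u * v = N := by
    have h1 : (u * v) ^ y = N ^ y := by rw [mul_pow, ← hua, ← hvb]; exact hkey
    exact Nat.pow_left_injective (by omega) h1
  have hupos : 0 < u := by
    rcases Nat.eq_zero_or_pos u with h | h
    · exfalso; subst h; rw [zero_pow hy.ne'] at hua; omega
    · exact h
  have huodd : Odd u := by
    rcases Nat.even_or_odd u with h | h
    · exfalso
      have : Even a := by rw [hua]; exact (Nat.even_pow).mpr ⟨h, by omega⟩
      exact (Nat.not_even_iff_odd.mpr haodd) this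
    · exact h
  have hvodd : Odd v := by
    rcases Nat.even_or_odd v with h | h
    · exfalso
      have : Even b := by rw [hvb]; exact (Nat.even_pow).mpr ⟨h, by omega⟩
      exact (Nat.not_even_iff_odd.mpr hbodd) this
    · exact h
  have huvlt : u < v := by
    have h1 : u ^ y < v ^ y := by rw [← hua, ← hvb]; omega
    exact lt_of_pow_lt_pow_left₀ y (Nat.zero_le v) h1
  have hv3 : 3 ≤ v := by
    rw [Nat.odd_iff] at hvodd
    omega
  have hsum : u ^ y + v ^ y = 2 ^ (M + 1) := by rw [← hua, ← hvb]; exact habsum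
  have hdvdsum : u + v ∣ 2 ^ (M + 1) := by
    rw [← hsum]
    exact Odd.nat_add_dvd_pow_add_pow u v hyo
  obtain ⟨j, hjle, hjv⟩ := (Nat.dvd_prime_pow Nat.prime_two).mp hdvdsum
  have hj2 : 2 ≤ j := by
    have h4 : 4 ≤ 2 ^ j := by omega
    have := (Nat.pow_le_pow_iff_right (by omega : 1 < 2)).mp (by omega : 2 ^ 2 ≤ 2 ^ j)
    omega
  -- show j = M + 1
  have hjM : j = M + 1 := by
    by_contra hne
    have hjM' : j ≤ M := by omega
    obtain ⟨m, hm⟩ : ∃ m, y = m + 1 := ⟨y - 1, by omega⟩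
    have hmeven : Even m := by
      rw [Nat.odd_iff] at hyo
      rw [Nat.even_iff]
      omega
    have hbin := binom_aux (-(v : ℤ)) ((2 : ℤ) ^ j) m
    have hUV : (-(v : ℤ) + 2 ^ j) = (u : ℤ) := by
      have : ((u : ℤ)) + v = 2 ^ j := by exact_mod_cast hjv
      linarith
    rw [hUV] at hbin
    rw [Odd.neg_pow (by rw [← hm]; exact_mod_cast hyo), Even.neg_pow (by exact_mod_cast hmeven)]
      at hbin
    -- hbin : (2^j)^2 ∣ u^(m+1) - -(v^(m+1)) - (m+1) * v^m * 2^j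
    have hP : ((u : ℤ)) ^ y + (v : ℤ) ^ y = 2 ^ (M + 1) := by exact_mod_cast hsum
    have hdvd1 : (2 : ℤ) ^ (j + 1) ∣ (u : ℤ) ^ y + (v : ℤ) ^ y := by
      rw [hP]
      exact pow_dvd_pow 2 (by omega)
    have hdvd2 : (2 : ℤ) ^ (j + 1) ∣ ((2 : ℤ) ^ j) ^ 2 := by
      rw [← pow_mul]
      exact pow_dvd_pow 2 (by omega)
    have hdvd3 : (2 : ℤ) ^ (j + 1) ∣ ((m : ℤ) + 1) * (v : ℤ) ^ m * 2 ^ j := by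
      have h := dvd_sub hdvd1 (hdvd2.trans hbin)
      have heqr : (u : ℤ) ^ y + (v : ℤ) ^ y -
          ((u : ℤ) ^ (m + 1) - -((v : ℤ) ^ (m + 1)) - ((m : ℤ) + 1) * (v : ℤ) ^ m * 2 ^ j)
          = ((m : ℤ) + 1) * (v : ℤ) ^ m * 2 ^ j := by
        rw [hm]; ring
      rwa [heqr] at h
    have h2dvd : (2 : ℤ) ∣ ((m : ℤ) + 1) * (v : ℤ) ^ m := by
      have h2j : ((2 : ℤ) ^ j) ≠ 0 := by positivity
      have h1 : (2 : ℤ) ^ j * 2 ∣ 2 ^ j * (((m : ℤ) + 1) * (v : ℤ) ^ m) := by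
        rw [← pow_succ]
        rw [show (2:ℤ) ^ j * (((m : ℤ) + 1) * (v : ℤ) ^ m)
            = ((m : ℤ) + 1) * (v : ℤ) ^ m * 2 ^ j by ring]
        exact hdvd3
      exact (mul_dvd_mul_iff_left h2j).mp h1
    have hodd : Odd (y * v ^ m) := hyo.mul (hvodd.pow)
    have h2n : (2 : ℕ) ∣ y * v ^ m := by
      have : ((y * v ^ m : ℕ) : ℤ) = ((m : ℤ) + 1) * (v : ℤ) ^ m := by push_cast [hm]; ring
      exact_mod_cast this ▸ h2dvd
    rw [Nat.odd_iff] at hodd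
    omega
  -- so u^y + v^y = u + v, forcing y = 1
  have hsum2 : u ^ y + v ^ y = u + v := by rw [hsum, ← hjM, ← hjv]
  have hy1 : y = 1 := by
    by_contra hne
    have hy3 : 3 ≤ y := by
      rw [Nat.odd_iff] at hyo
      omega
    have h1 : v ^ 3 ≤ v ^ y := Nat.pow_le_pow_right (by omega) hy3
    have h2 : 9 * v ≤ v ^ 3 := by
      have h := Nat.mul_le_mul (Nat.mul_le_mul hv3 hv3) (le_refl v)
      calc 9 * v = 3 * 3 * v := by ring
        _ ≤ v * v * v := h
        _ = v ^ 3 := by ring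
    omega
  subst hy1
  rw [pow_one] at hua hvb hsum2 hkey
  -- now u + v = 2^(M+1), u * v = N = 2^(r+1) - 1
  have husum : u + v = 2 ^ (M + 1) := by omega
  -- M ≤ r
  have hMr : M ≤ r := by
    have hu1' : (1 : ℤ) ≤ (u : ℤ) := by exact_mod_cast hupos
    have hv1' : (1 : ℤ) ≤ (v : ℤ) := by exact_mod_cast (by omega : 1 ≤ v)
    have h1z : (u : ℤ) + v ≤ u * v + 1 := by
      have h := mul_nonneg (sub_nonneg.mpr hu1') (sub_nonneg.mpr hv1')
      have h' : ((u : ℤ) - 1) * ((v : ℤ) - 1) = u * v - u - v + 1 := by ring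
      rw [h'] at h
      linarith
    have h1 : u + v ≤ u * v + 1 := by exact_mod_cast h1z
    have h2 : 2 ^ (M + 1) ≤ 2 ^ (r + 1) := by omega
    have := (Nat.pow_le_pow_iff_right (by omega : 1 < 2)).mp h2
    omega
  -- r + 1 ≤ 2M
  have hr2M : r + 1 ≤ 2 * M := by
    by_contra h
    have h1 : 2 * M + 2 ≤ r + 2 := by omega
    have h2 : (4 : ℤ) * (u * v) ≤ ((u : ℤ) + v) ^ 2 := by
      have hsq : (0 : ℤ) ≤ ((u : ℤ) - v) ^ 2 := sq_nonneg _
      have hexp : ((u : ℤ) - v) ^ 2 = ((u : ℤ) + v) ^ 2 - 4 * (u * v) := by ring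
      rw [hexp] at hsq
      linarith
    have h3 : 4 * (u * v) ≤ (u + v) ^ 2 := by exact_mod_cast h2
    have h4 : (u + v) ^ 2 = 2 ^ (2 * M + 2) := by
      rw [husum, ← pow_mul]; ring_nf
    have h5 : 2 ^ (2 * M + 2) ≤ 2 ^ (r + 2) := Nat.pow_le_pow_right (by omega) h1
    have h6 : 2 ^ (r + 3) = 2 * 2 ^ (r + 2) := by rw [pow_succ]; ring
    have h7 : 4 * N + 4 = 2 ^ (r + 3) := by
      have : 2 ^ (r + 3) = 4 * 2 ^ (r + 1) := by rw [pow_succ, pow_succ]; ring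
      omega
    have h8 : 8 ≤ 2 ^ (r + 2) := by
      have := Nat.pow_le_pow_right (by omega : 1 ≤ 2) (by omega : 3 ≤ r + 2)
      simpa using this
    omega
  -- z = 2
  have hz2' : z = 2 := by
    have h1 : r * z ≤ 2 * r := by omega
    have h2 : z ≤ 2 := Nat.le_of_mul_le_mul_left (by omega) hr
    omega
  have hMreq : M = r := by
    have h := hM
    rw [hz2'] at h
    omega
  -- u = 1
  have hu1 : u = 1 := by
    by_contra hne
    have h2u : 2 ≤ u := by omega
    have h1 : 2 * v ≤ u * v := Nat.mul_le_mul_right v h2u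
    have h2 : u + v = u * v + 1 := by
      rw [husum, hMreq, huv]
      omega
    omega
  refine ⟨?_, rfl, hz2'⟩
  -- a = u = 1, a + x = 2^M = 2^r
  rw [hMreq] at ha
  omega
end

section
/- Suppose 4 | k, 2k-1 is an odd prime power, and k = ℓ^2 is a perfect square (ℓ a positive even integer). Then the only positive integer solution of x^2 + (2k-1)^y = k^z is (x, y, z) = (k-1, 1, 2). -/
/-!
Write `A = 2k - 1 = p ^ m`, so that `A + 1 = 2ℓ²`. In `(ℓ^z - x)(ℓ^z + x) = A^y` both factors are
powers of `p`, and their gcd divides `2ℓ^z`, which is prime to `A`; hence `ℓ^z - x = 1` and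
`A^y + 1 = 2ℓ^z`. Comparing sizes gives `z ≥ 2`, and `A ≡ -1 (mod 4)` forces `y` to be odd. Then
`A^y + 1 = (A + 1) S` with `S = ∑ (-A)^i` a sum of `y` odd terms, so `S = ℓ^(z-2)` is odd; as `ℓ` is
even, `z = 2`, and then `A^y = A` gives `y = 1`.
-/

theorem Nat.eq_one_of_mul_eq_prime_pow_of_coprime {p a b n : ℕ} (hp : p.Prime)
    (hab : a * b = p ^ n) (hle : a ≤ b) (hcop : a.Coprime b) : a = 1 := by
  obtain ⟨i, -, rfl⟩ := (Nat.dvd_prime_pow hp).mp (Dvd.intro b hab)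
  obtain ⟨j, -, rfl⟩ := (Nat.dvd_prime_pow hp).mp (Dvd.intro_left _ hab)
  exact hcop.eq_one_of_dvd (pow_dvd_pow p ((Nat.pow_le_pow_iff_right hp.one_lt).mp hle))

theorem Nat.coprime_pow_two_mul_pow_of_add_one_eq {A ℓ : ℕ} (h : A + 1 = 2 * ℓ ^ 2) (y z : ℕ) :
    (A ^ y).Coprime (2 * ℓ ^ z) := by
  have hcop : A.Coprime (2 * ℓ ^ 2) :=
    h ▸ Nat.coprime_self_add_right.mpr (Nat.coprime_one_right _)
  have hℓ : A.Coprime ℓ := (Nat.coprime_pow_right_iff two_pos _ _).mp hcop.coprime_mul_left_right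
  exact (hcop.coprime_mul_right_right.mul_right (hℓ.pow_right z)).pow_left y

theorem Nat.add_one_eq_of_sq_add_prime_pow_eq_sq {p e x n : ℕ} (hp : p.Prime)
    (hcop : (p ^ e).Coprime (2 * n)) (h : x ^ 2 + p ^ e = n ^ 2) :
    x + 1 = n ∧ p ^ e + 1 = 2 * n := by
  have hxn : x ≤ n := (Nat.pow_le_pow_iff_left two_ne_zero).mp (by omega)
  have hfac : (n - x) * (n + x) = p ^ e := by rw [mul_comm, ← Nat.sq_sub_sq]; omega
  have hgcd : (n - x).gcd (n + x) = 1 := by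
    refine Nat.eq_one_of_dvd_coprimes hcop ?_ ?_
    · exact hfac ▸ (Nat.gcd_dvd_left _ _).mul_right _
    · rw [show 2 * n = n - x + (n + x) by omega]
      exact Nat.dvd_add (Nat.gcd_dvd_left _ _) (Nat.gcd_dvd_right _ _)
  have hsub : n - x = 1 := Nat.eq_one_of_mul_eq_prime_pow_of_coprime hp hfac (by omega) hgcd
  rw [hsub, one_mul] at hfac
  omega

theorem Nat.odd_of_four_dvd_pow_add_one {A y : ℕ} (hA : 4 ∣ A + 1) (h : 4 ∣ A ^ y + 1) :
    Odd y := by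
  have hA' : (A : ZMod 4) = -1 :=
    eq_neg_of_add_eq_zero_left (by exact_mod_cast (ZMod.natCast_eq_zero_iff _ _).mpr hA)
  have h' : (A : ZMod 4) ^ y + 1 = 0 := by
    exact_mod_cast (ZMod.natCast_eq_zero_iff _ _).mpr h
  by_contra hy
  rw [hA', (Nat.not_odd_iff_even.mp hy).neg_one_pow] at h'
  exact absurd h' (by decide)

theorem Nat.exists_odd_add_one_mul_eq_pow_add_one {A y : ℕ} (hA : Odd A) (hy : Odd y) :
    ∃ S, Odd S ∧ A ^ y + 1 = (A + 1) * S := by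
  set T : ℤ := ∑ i ∈ Finset.range y, (-(A : ℤ)) ^ i with hT
  have hmul : (A + 1 : ℤ) * T = A ^ y + 1 := by
    have := geom_sum_mul (-(A : ℤ)) y
    rw [hy.neg_pow] at this
    linear_combination -this
  have hTodd : (T : ZMod 2) = 1 := by
    have hA2 : (A : ZMod 2) = 1 := (ZMod.natCast_eq_one_iff_odd).mpr hA
    simp only [hT, Int.cast_sum, Int.cast_pow, Int.cast_neg, Int.cast_natCast, hA2,
      show (-1 : ZMod 2) = 1 by decide, one_pow, Finset.sum_const, Finset.card_range,
      nsmul_eq_mul, mul_one]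
    exact (ZMod.natCast_eq_one_iff_odd).mpr hy
  lift T to ℕ using hy.geom_sum_pos.le with S
  exact ⟨S, (ZMod.natCast_eq_one_iff_odd).mp (by exact_mod_cast hTodd),
    by exact_mod_cast hmul.symm⟩

theorem Nat.eq_one_and_eq_two_of_pow_add_one_eq_two_mul_pow {A ℓ y z : ℕ} (hℓ : Even ℓ)
    (hA : A + 1 = 2 * ℓ ^ 2) (hy : 0 < y) (h : A ^ y + 1 = 2 * ℓ ^ z) : y = 1 ∧ z = 2 := by
  have hℓ2 : 2 ≤ ℓ := by
    obtain ⟨t, rfl⟩ := hℓ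
    rcases t with _ | t
    · simp at hA
    · omega
  have hA2 : 2 ≤ A := by nlinarith
  have hz : 2 ≤ z := by
    refine (Nat.pow_le_pow_iff_right hℓ2).mp ?_
    have := Nat.le_self_pow hy.ne' A
    omega
  obtain ⟨w, rfl⟩ := Nat.exists_eq_add_of_le hz
  have h' : A ^ y + 1 = (A + 1) * ℓ ^ w := by rw [h, hA, pow_add]; ring
  have h4 : 4 ∣ A + 1 := by
    obtain ⟨t, rfl⟩ := hℓ
    exact ⟨2 * t ^ 2, by rw [hA]; ring⟩
  have hAodd : Odd A := Nat.odd_iff.mpr (by omega)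
  obtain ⟨S, hS, hSeq⟩ := Nat.exists_odd_add_one_mul_eq_pow_add_one hAodd
    (Nat.odd_of_four_dvd_pow_add_one h4 (h' ▸ h4.mul_right _))
  have hSw : S = ℓ ^ w := Nat.eq_of_mul_eq_mul_left (by omega) (hSeq.symm.trans h')
  obtain rfl : w = 0 := by
    by_contra hw
    exact Nat.not_even_iff_odd.mpr hS (hSw ▸ Nat.even_pow.mpr ⟨hℓ, hw⟩)
  rw [add_zero] at h
  exact ⟨(Nat.pow_eq_self_iff hA2).mp (by omega), rfl⟩

theorem stmt_3_general (k ℓ : ℕ) (hℓe : Even ℓ) (hk : k = ℓ ^ 2)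
    (hpp : ∃ p m : ℕ, p.Prime ∧ Odd p ∧ 0 < m ∧ 2 * k - 1 = p ^ m)
    (x y z : ℕ) (hy : 0 < y)
    (heq : x ^ 2 + (2 * k - 1) ^ y = k ^ z) :
    x = k - 1 ∧ y = 1 ∧ z = 2 := by
  obtain ⟨p, m, hp, -, -, hpm⟩ := hpp
  have hA : 2 * k - 1 + 1 = 2 * ℓ ^ 2 := by
    have := pow_pos hp.pos m
    omega
  have hcop := Nat.coprime_pow_two_mul_pow_of_add_one_eq hA y z
  rw [hpm, ← pow_mul] at hcop
  have heq' : x ^ 2 + p ^ (m * y) = (ℓ ^ z) ^ 2 := by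
    rw [pow_mul, ← hpm, heq, hk, ← pow_mul, ← pow_mul, mul_comm]
  obtain ⟨hx, hAy⟩ := Nat.add_one_eq_of_sq_add_prime_pow_eq_sq hp hcop heq'
  rw [pow_mul, ← hpm] at hAy
  obtain ⟨rfl, rfl⟩ := Nat.eq_one_and_eq_two_of_pow_add_one_eq_two_mul_pow hℓe hA hy hAy
  exact ⟨by omega, rfl, rfl⟩

theorem stmt_3 (k ℓ : ℕ) (hℓ : 0 < ℓ) (hℓe : Even ℓ) (hk : k = ℓ ^ 2)
    (h4 : 4 ∣ k)
    (hpp : ∃ p m : ℕ, p.Prime ∧ Odd p ∧ 0 < m ∧ 2 * k - 1 = p ^ m)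
    (x y z : ℕ) (hx : 0 < x) (hy : 0 < y) (hz : 0 < z)
    (heq : x ^ 2 + (2 * k - 1) ^ y = k ^ z) :
    x = k - 1 ∧ y = 1 ∧ z = 2 :=
  stmt_3_general k ℓ hℓe hk hpp x y z hy heq
end

section
/- Let ℓ be an even positive integer and k = ℓ^2. If y is an odd positive integer and z a positive integer satisfy 2ℓ^z = (2k-1)^y + 1, then z = 2 and y = 1. -/
theorem stmt_4 (ℓ k y z : ℕ) (hℓ : 0 < ℓ) (hℓe : Even ℓ) (hk : k = ℓ ^ 2)
    (hy : 0 < y) (hyo : Odd y) (hz : 0 < z)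
    (heq : 2 * ℓ ^ z = (2 * k - 1) ^ y + 1) :
    z = 2 ∧ y = 1 := by
  obtain ⟨t, ht⟩ := hℓe
  have hL2 : 2 ≤ ℓ := by omega
  have hLZ : 2 ≤ (ℓ : ℤ) := by exact_mod_cast hL2
  subst hk
  have hk1 : 1 ≤ 2 * ℓ ^ 2 := by nlinarith
  zify [hk1] at heq
  set L : ℤ := (ℓ : ℤ) with hLdef
  have heqZ : 2 * L ^ z = (2 * L ^ 2 - 1) ^ y + 1 := heq
  set m : ℤ := 2 * L ^ 2 - 1 with hmdef
  have hm7 : 7 ≤ m := by nlinarith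
  set S : ℤ := ∑ i ∈ Finset.range y, (-m) ^ i with hSdef
  have hgeo := geom_sum_mul (-m) y
  have hmy : (-m) ^ y = -(m ^ y) := Odd.neg_pow hyo m
  rw [hmy] at hgeo
  have hS : (m + 1) * S = m ^ y + 1 := by linear_combination -hgeo
  have hSpos : 0 < S := by
    have h1 : 0 < m ^ y + 1 := by positivity
    nlinarith
  have hmodd : Odd (-m) := ⟨-(L ^ 2), by rw [hmdef]; ring⟩
  have hSodd : Odd S := by
    rw [Int.odd_iff, hSdef, Finset.sum_int_mod]
    have h1 : ∀ i ∈ Finset.range y, (-m) ^ i % 2 = 1 :=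
      fun i _ => Int.odd_iff.1 (hmodd.pow)
    rw [Finset.sum_congr rfl h1]
    simp only [Finset.sum_const, Finset.card_range, nsmul_eq_mul, mul_one]
    exact Int.odd_iff.1 (Int.odd_coe_nat y |>.2 hyo)
  have hLz : L ^ z = L ^ 2 * S := by
    have : m + 1 = 2 * L ^ 2 := by rw [hmdef]; ring
    rw [this] at hS
    linarith [heqZ, hS]
  have h2L : (2 : ℤ) ∣ L := ⟨t, by rw [hLdef, ht]; push_cast; ring⟩
  -- cases on z
  obtain hz1 | hz2 := lt_or_ge z 2
  · -- z = 1
    interval_cases z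
    exfalso
    have : L ^ 1 = L ^ 2 * S := hLz
    nlinarith
  · obtain ⟨s, rfl⟩ : ∃ s, z = s + 2 := ⟨z - 2, by omega⟩
    have hcancel : L ^ s = S := by
      have hL0 : L ^ 2 ≠ 0 := by positivity
      have : L ^ 2 * L ^ s = L ^ 2 * S := by rw [← hLz]; ring
      exact mul_left_cancel₀ hL0 this
    have hs0 : s = 0 := by
      by_contra hs
      have hs1 : 1 ≤ s := by omega
      have : (2 : ℤ) ∣ S := by
        rw [← hcancel]
        exact dvd_pow h2L (by omega)
      exact (Int.not_odd_iff_even.2 ⟨S / 2, by omega⟩) hSodd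
    subst hs0
    have hS1 : S = 1 := by simpa using hcancel.symm
    rw [hS1, mul_one] at hS
    have hmm : m ^ y = m := by linarith
    have hy1 : y = 1 := by
      by_contra hy2
      have hy2' : 2 ≤ y := by omega
      have h1 : m ^ 2 ≤ m ^ y := pow_le_pow_right₀ (by linarith) hy2'
      nlinarith
    exact ⟨rfl, hy1⟩
end

section
/- The equation x^2 + 631^5 = 316^z has no solutions in positive integers x, z with z > 5 and z odd. -/
theorem stmt_7 : ¬ ∃ x z : ℕ, 0 < x ∧ 5 < z ∧ Odd z ∧
    x ^ 2 + 631 ^ 5 = 316 ^ z := by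
  rintro ⟨x, z, hx, hz, ⟨k, hk⟩, heq⟩
  have h : ((x : ZMod 61)) ^ 2 + 631 ^ 5 = 316 ^ z := by
    have := congrArg (Nat.cast : ℕ → ZMod 61) heq
    push_cast at this
    exact this
  rw [hk] at h
  have h316 : (316 : ZMod 61) ^ 2 = -1 := by decide
  have h2 : (316 : ZMod 61) ^ (2 * k + 1) = (-1) ^ k * 316 := by
    rw [pow_add, pow_mul, h316, pow_one]
  rw [h2] at h
  have key : ∀ a : ZMod 61, a ^ 2 + 631 ^ 5 ≠ 316 ∧ a ^ 2 + 631 ^ 5 ≠ -316 := by decide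
  rcases Nat.even_or_odd k with he | ho
  · rw [he.neg_one_pow, one_mul] at h
    exact (key x).1 h
  · rw [ho.neg_one_pow, neg_one_mul] at h
    exact (key x).2 h
end

section
/- The equation x^2 + 751^5 = 376^z has no solutions in positive integers x, z with z > 5 and z odd. -/
theorem stmt_9 : ¬ ∃ x z : ℕ, 0 < x ∧ 5 < z ∧ Odd z ∧
    x ^ 2 + 751 ^ 5 = 376 ^ z := by
  rintro ⟨x, z, hx, hz, ⟨k, hk⟩, heq⟩
  have h : ((x : ZMod 13)) ^ 2 + 751 ^ 5 = 376 ^ z := by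
    exact_mod_cast congrArg (fun n : ℕ => (n : ZMod 13)) heq
  rw [hk, pow_add, pow_mul] at h
  have h2 : ((376 : ZMod 13)) ^ 2 = 1 := by decide
  rw [h2, one_pow, one_mul] at h
  revert h
  generalize (x : ZMod 13) = a
  revert a
  decide
end

section
/- Every integer solution (u, v) of u^2 - 372·v^2 = 1 satisfies v ≡ 0 (mod 3). -/
def sqrtL : List Nat := [19, 38, 57, 77, 96, 115, 135, 154, 173, 192, 212, 231, 250, 270, 289, 308, 327, 347, 366, 385, 405, 424, 443, 462, 482, 501, 520, 540, 559, 578, 597, 617, 636, 655, 675, 694, 713, 732, 752, 771, 790, 810, 829, 848, 867, 887, 906, 925, 945, 964, 983, 1002, 1022, 1041, 1060, 1080, 1099, 1118, 1137, 1157, 1176, 1195, 1215, 1234, 1253, 1272, 1292, 1311, 1330, 1350, 1369, 1388, 1407, 1427, 1446, 1465, 1485, 1504, 1523, 1542, 1562, 1581, 1600, 1620, 1639, 1658, 1677, 1697, 1716, 1735, 1755, 1774, 1793, 1813, 1832, 1851, 1870, 1890, 1909, 1928, 1948, 1967, 1986, 2005, 2025, 2044, 2063, 2083, 2102, 2121,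 2140, 2160, 2179, 2198, 2218, 2237, 2256, 2275, 2295, 2314, 2333, 2353, 2372, 2391, 2410, 2430, 2449, 2468, 2488, 2507, 2526, 2545, 2565, 2584, 2603, 2623, 2642, 2661, 2680, 2700, 2719, 2738, 2758, 2777, 2796, 2815, 2835, 2854, 2873, 2893, 2912, 2931, 2950, 2970, 2989, 3008, 3028, 3047, 3066, 3085, 3105, 3124, 3143, 3163, 3182, 3201, 3220, 3240, 3259, 3278, 3298, 3317, 3336, 3355, 3375, 3394, 3413, 3433, 3452, 3471, 3491, 3510, 3529, 3548, 3568, 3587, 3606, 3626, 3645, 3664, 3683, 3703, 3722, 3741, 3761, 3780, 3799, 3818, 3838, 3857, 3876, 3896, 3915, 3934, 3953, 3973, 3992, 4011, 4031, 4050, 4069, 4088, 4108, 4127, 4146, 4166, 4185, 4204, 4223, 4243, 4262, 4281, 4301, 4320, 4339, 4358, 4378, 4397, 4416, 4436, 4455, 4474, 4493, 4513, 4532, 4551, 4571, 4590, 4609, 4628, 4648, 4667, 4686, 4706, 4725, 4744, 4763, 4783, 4802, 4821, 4841, 4860, 4879, 4898, 4918, 4937, 4956, 4976, 4995, 5014,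 5033, 5053, 5072, 5091, 5111, 5130, 5149, 5168, 5188, 5207, 5226, 5246, 5265, 5284, 5304, 5323, 5342, 5361, 5381, 5400, 5419, 5439, 5458, 5477, 5496, 5516, 5535, 5554, 5574, 5593, 5612, 5631, 5651, 5670, 5689, 5709, 5728, 5747, 5766, 5786, 5805, 5824, 5844, 5863, 5882, 5901, 5921, 5940, 5959, 5979, 5998, 6017, 6036, 6056, 6075, 6094, 6114, 6133, 6152, 6171, 6191, 6210, 6229, 6249, 6268, 6287, 6306, 6326, 6345, 6364, 6384, 6403, 6422, 6441, 6461, 6480, 6499, 6519, 6538, 6557, 6576, 6596, 6615, 6634, 6654, 6673, 6692, 6711, 6731, 6750, 6769, 6789, 6808, 6827, 6846, 6866, 6885, 6904, 6924, 6943, 6962, 6982, 7001, 7020, 7039, 7059, 7078, 7097, 7117, 7136, 7155, 7174, 7194, 7213, 7232, 7252, 7271, 7290, 7309, 7329, 7348, 7367, 7387, 7406, 7425, 7444, 7464, 7483, 7502, 7522, 7541, 7560, 7579, 7599, 7618, 7637, 7657, 7676, 7695, 7714, 7734, 7753, 7772, 7792, 7811, 7830, 7849, 7869, 7888, 7907,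 7927, 7946, 7965, 7984, 8004, 8023, 8042, 8062, 8081, 8100, 8119, 8139, 8158, 8177, 8197, 8216, 8235, 8254, 8274, 8293, 8312, 8332, 8351, 8370, 8389, 8409, 8428, 8447, 8467, 8486, 8505, 8524, 8544, 8563, 8582, 8602, 8621, 8640, 8659, 8679, 8698, 8717, 8737, 8756, 8775, 8795, 8814, 8833, 8852, 8872, 8891, 8910, 8930, 8949, 8968, 8987, 9007, 9026, 9045, 9065, 9084, 9103, 9122, 9142, 9161, 9180, 9200, 9219, 9238, 9257, 9277, 9296, 9315, 9335, 9354, 9373, 9392, 9412, 9431, 9450, 9470, 9489, 9508, 9527, 9547, 9566, 9585, 9605, 9624, 9643, 9662, 9682, 9701, 9720, 9740, 9759, 9778, 9797, 9817, 9836, 9855, 9875, 9894, 9913, 9932, 9952, 9971, 9990, 10010, 10029, 10048, 10067, 10087, 10106, 10125, 10145, 10164, 10183, 10202, 10222, 10241, 10260, 10280, 10299, 10318, 10337, 10357, 10376, 10395, 10415, 10434, 10453, 10473, 10492, 10511, 10530, 10550, 10569, 10588, 10608, 10627, 10646, 10665, 10685, 10704, 10723, 10743, 10762, 10781, 10800,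 10820, 10839, 10858, 10878, 10897, 10916, 10935, 10955, 10974, 10993, 11013, 11032, 11051, 11070, 11090, 11109, 11128, 11148, 11167, 11186, 11205, 11225, 11244, 11263, 11283, 11302, 11321, 11340, 11360, 11379, 11398, 11418, 11437, 11456, 11475, 11495, 11514, 11533, 11553, 11572, 11591, 11610, 11630, 11649, 11668, 11688, 11707, 11726, 11745, 11765, 11784, 11803, 11823, 11842, 11861, 11880, 11900, 11919, 11938, 11958, 11977, 11996, 12015, 12035, 12054, 12073, 12093, 12112, 12131]

set_option maxRecDepth 100000 in
lemma key : ∀ y ∈ Finset.Icc 1 629,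
    (sqrtL.getD (y-1) 0) * (sqrtL.getD (y-1) 0) < 1 + 372*y*y ∧
    1 + 372*y*y < (sqrtL.getD (y-1) 0 + 1) * (sqrtL.getD (y-1) 0 + 1) := by decide

lemma noSquare (y : ℕ) (h1 : 1 ≤ y) (h2 : y ≤ 629) (x : ℕ) : x * x ≠ 1 + 372 * y * y := by
  obtain ⟨hlo, hhi⟩ := key y (Finset.mem_Icc.mpr ⟨h1, h2⟩)
  set k := sqrtL.getD (y-1) 0
  intro hx
  rcases le_or_gt x k with h | h
  · have := Nat.mul_le_mul h h
    omega
  · have h' : k + 1 ≤ x := h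
    have := Nat.mul_le_mul h' h'
    omega

lemma noSmallSol (x y : ℤ) (h : x ^ 2 - 372 * y ^ 2 = 1) (h1 : 1 ≤ y) (h2 : y ≤ 629) :
    False := by
  have hx : x.natAbs * x.natAbs = 1 + 372 * y.natAbs * y.natAbs := by
    have := congrArg Int.natAbs (by linarith : x ^ 2 = 1 + 372 * y ^ 2)
    zify at this ⊢
    nlinarith [sq_abs x, sq_abs y, abs_nonneg x, abs_nonneg y]
  exact noSquare y.natAbs (by omega) (by omega) x.natAbs hx

def a₁ : Pell.Solution₁ 372 := Pell.Solution₁.mk 12151 630 (by norm_num)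

lemma a₁_x : a₁.x = 12151 := rfl
lemma a₁_y : a₁.y = 630 := rfl

lemma fund : Pell.IsFundamental a₁ := by
  refine ⟨by rw [a₁_x]; norm_num, by rw [a₁_y]; norm_num, ?_⟩
  intro b hb
  by_contra hlt
  push_neg at hlt
  rw [a₁_x] at hlt
  have hprop := b.prop
  have hyne : b.y ≠ 0 := Pell.Solution₁.y_ne_zero_of_one_lt_x hb
  have hx' : b.x ≤ 12150 := by omega
  have hx2 : b.x ^ 2 ≤ 12150 ^ 2 := by nlinarith
  have hy2 : b.y ^ 2 < 630 ^ 2 := by nlinarith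
  have habs : |b.y| ≤ 629 := by
    nlinarith [sq_abs b.y, abs_nonneg b.y, sq_nonneg (|b.y| - 630)]
  have habs1 : 1 ≤ |b.y| := by
    rcases lt_or_ge 0 b.y with h | h
    · rw [abs_of_pos h]; omega
    · rw [abs_of_nonpos h]; omega
  refine noSmallSol b.x |b.y| ?_ habs1 habs
  rw [sq_abs]; exact hprop

lemma three_dvd_y_pow (n : ℕ) : (3 : ℤ) ∣ (a₁ ^ n).y := by
  induction n with
  | zero => simp
  | succ n ih =>
    rw [pow_succ, Pell.Solution₁.y_mul]
    refine dvd_add ?_ (ih.mul_right _)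
    rw [a₁_y]
    exact Dvd.dvd.mul_left (by norm_num) _

lemma three_dvd_y_zpow (n : ℤ) : (3 : ℤ) ∣ (a₁ ^ n).y := by
  rcases le_or_gt 0 n with h | h
  · lift n to ℕ using h
    rw [zpow_natCast]; exact three_dvd_y_pow n
  · have : a₁ ^ n = (a₁ ^ n.natAbs)⁻¹ := by
      rw [← zpow_natCast, ← zpow_neg]
      congr 1
      omega
    rw [this, Pell.Solution₁.y_inv]
    exact (three_dvd_y_pow n.natAbs).neg_right

theorem stmt_14 (u v : ℤ) (h : u ^ 2 - 372 * v ^ 2 = 1) : 3 ∣ v := by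
  obtain ⟨n, hn⟩ := fund.eq_zpow_or_neg_zpow (Pell.Solution₁.mk u v h)
  have hv : v = (Pell.Solution₁.mk u v h).y := rfl
  rcases hn with hn | hn
  · rw [hv, hn]; exact three_dvd_y_zpow n
  · rw [hv, hn, Pell.Solution₁.y_neg]
    exact (three_dvd_y_zpow n).neg_right
end

section
/- If (x, y, z) are positive integers with x^2 + (2k-1)^y = k^z, 4 | k, 2k-1 an odd prime power, y odd and z odd with z > y, then writing y = 6A + i with i ∈ {3, 5} and z = 3B + j with 0 ≤ j ≤ 2, the point (U, V) = (k^{B+j}/(2k-1)^{2A}, x·k^j/(2k-1)^{3A}) satisfies V^2 = U^3 - (2k-1)^i·k^{2j}. -/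
theorem sq_eq_cube_sub_of_sq_add_pow_eq_pow {K : Type*} [Field K] {x d k : K} {A B i j : ℕ}
    (hd : d ≠ 0) (h : x ^ 2 + d ^ (6 * A + i) = k ^ (3 * B + j)) :
    (x * k ^ j / d ^ (3 * A)) ^ 2 = (k ^ (B + j) / d ^ (2 * A)) ^ 3 - d ^ i * k ^ (2 * j) := by
  field_simp
  linear_combination k ^ (2 * j) * d ^ (6 * A) * h

theorem stmt_19_general (k x y z A B i j : ℕ) (hk : 0 < k)
    (heq : x ^ 2 + (2 * k - 1) ^ y = k ^ z)
    (hyA : y = 6 * A + i)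
    (hzB : z = 3 * B + j) :
    ((x : ℚ) * (k : ℚ) ^ j / ((2 * k - 1 : ℕ) : ℚ) ^ (3 * A)) ^ 2 =
      ((k : ℚ) ^ (B + j) / ((2 * k - 1 : ℕ) : ℚ) ^ (2 * A)) ^ 3 -
        ((2 * k - 1 : ℕ) : ℚ) ^ i * (k : ℚ) ^ (2 * j) := by
  subst hyA hzB
  have hd : ((2 * k - 1 : ℕ) : ℚ) ≠ 0 := by exact_mod_cast (by omega : 2 * k - 1 ≠ 0)
  exact sq_eq_cube_sub_of_sq_add_pow_eq_pow hd (by exact_mod_cast heq)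

theorem stmt_19 (k x y z A B i j : ℕ) (hk : 0 < k) (h4 : 4 ∣ k)
    (hpp : ∃ p m : ℕ, p.Prime ∧ Odd p ∧ 0 < m ∧ 2 * k - 1 = p ^ m)
    (hx : 0 < x) (hy : 0 < y) (hz : 0 < z)
    (hyo : Odd y) (hzo : Odd z) (hzy : z > y)
    (heq : x ^ 2 + (2 * k - 1) ^ y = k ^ z)
    (hi : i = 3 ∨ i = 5) (hyA : y = 6 * A + i)
    (hj : j ≤ 2) (hzB : z = 3 * B + j) :
    ((x : ℚ) * (k : ℚ) ^ j / ((2 * k - 1 : ℕ) : ℚ) ^ (3 * A)) ^ 2 =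
      ((k : ℚ) ^ (B + j) / ((2 * k - 1 : ℕ) : ℚ) ^ (2 * A)) ^ 3 -
        ((2 * k - 1 : ℕ) : ℚ) ^ i * (k : ℚ) ^ (2 * j) :=
  stmt_19_general k x y z A B i j hk heq hyA hzB
end
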